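/- arXiv:2005.14424 — 5 statements merged into one kernel-verified Lean document; each statement's English description precedes it below -/
import Mathlib

section
/- For λ ≥ 0 and uniform distributions Π, Π' on finite sets S, S' with |S| = |S'| = n, the total positive part ∫(λ dΠ − dΠ')_+ = Σ_z max(λ·Π(z) − Π'(z), 0) equals λ·(1 − |S∩S'|/n) + (|S∩S'|/n)·max(λ − 1, 0). -/
/-- For `λ ≥ 0` and uniform distributions on finite sets `S`, `S'` of equal
cardinality `n`, `∑_z max(λ·Π(z) − Π'(z), 0) = λ(1 − |S∩S'|/n) + (|S∩S'|/n)·max(λ−1,0)`. -/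
theorem positive_part_integral_equal_size {α : Type*} [Fintype α] [DecidableEq α]
    (S S' : Finset α) (hS : S.Nonempty) (hS' : S'.Nonempty)
    (n : ℕ) (hSn : S.card = n) (hS'n : S'.card = n)
    (lam : ℝ) (hlam : 0 ≤ lam) :
    ∑ z : α, max (lam * (if z ∈ S then (1 : ℝ) / n else 0)
                    - (if z ∈ S' then (1 : ℝ) / n else 0)) 0
      = lam * (1 - ((S ∩ S').card : ℝ) / n)
        + (((S ∩ S').card : ℝ) / n) * max (lam - 1) 0 := by
  have hn : 0 < (n : ℝ) := by
    have : 0 < n := hSn ▸ Finset.card_pos.mpr hS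
    exact_mod_cast this
  have key : ∀ z : α,
      max (lam * (if z ∈ S then (1 : ℝ) / n else 0)
        - (if z ∈ S' then (1 : ℝ) / n else 0)) 0
      = (if z ∈ S \ S' then lam / n else 0)
        + (if z ∈ S ∩ S' then max (lam - 1) 0 / n else 0) := by
    intro z
    by_cases h1 : z ∈ S <;> by_cases h2 : z ∈ S' <;>
      simp only [h1, h2, if_true, if_false, Finset.mem_sdiff, Finset.mem_inter,
        and_true, and_false, not_true, not_false_iff, mul_zero, zero_sub, sub_zero,
        mul_one_div, add_zero, zero_add, max_self]
    · rw [← sub_div, ← max_div_div_right hn.le, zero_div]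
    · exact max_eq_left (by positivity)
    · rw [max_eq_right]
      exact neg_nonpos.mpr (by positivity)
  rw [Finset.sum_congr rfl fun z _ => key z, Finset.sum_add_distrib,
    Finset.sum_ite_mem, Finset.sum_ite_mem, Finset.univ_inter, Finset.univ_inter,
    Finset.sum_const, Finset.sum_const]
  have hk : ((S \ S').card : ℝ) = n - ((S ∩ S').card : ℝ) := by
    have := Finset.card_sdiff_add_card_inter S S'
    have hle : (S ∩ S').card ≤ n := hSn ▸ Finset.card_le_card (Finset.inter_subset_left)
    rw [hSn] at this
    push_cast [← this]
    ring
  rw [nsmul_eq_mul, nsmul_eq_mul, hk]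
  field_simp
end

section
/- Let Π be uniform on S = P_1 × ⋯ × P_L and Π' be uniform on S' = P'_1 × ⋯ × P'_L, where each P_i, P'_i is a finite nonempty set. Writing n_i = |P_i|, n'_i = |P'_i|, m_i = |P_i ∩ P'_i|, for any λ ≥ 0: Σ_z max(λΠ(z) − Π'(z), 0) = λ·(1 − ∏_{i: P_i ≠ P'_i} m_i/n_i) + (∏_{i: P_i ≠ P'_i} m_i/n_i)·max(λ − ∏_{i: P_i ≠ P'_i} n_i/n'_i, 0). -/
set_option maxHeartbeats 800000
open Finset


/-- For uniform distributions on product sets `S = P_1 × ⋯ × P_L` and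
`S' = P'_1 × ⋯ × P'_L`, for any `λ ≥ 0`,
`∑_z max(λΠ(z) − Π'(z), 0)
  = λ(1 − ∏_{i: P_i ≠ P'_i} m_i/n_i) + (∏_{i: P_i ≠ P'_i} m_i/n_i)·max(λ − ∏_{i: P_i≠P'_i} n_i/n'_i, 0)`. -/
theorem positive_part_integral_product {L : ℕ} {α : Fin L → Type*}
    [∀ i, Fintype (α i)] [∀ i, DecidableEq (α i)]
    (P P' : ∀ i, Finset (α i)) (hP : ∀ i, (P i).Nonempty) (hP' : ∀ i, (P' i).Nonempty)
    (lam : ℝ) (hlam : 0 ≤ lam) :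
    ∑ z : (∀ i, α i),
        max (lam * (if z ∈ Fintype.piFinset P then (1 : ℝ) / (Fintype.piFinset P).card else 0)
              - (if z ∈ Fintype.piFinset P' then (1 : ℝ) / (Fintype.piFinset P').card else 0)) 0
      = lam * (1 - ∏ i ∈ Finset.univ.filter (fun i => P i ≠ P' i),
                  ((P i ∩ P' i).card : ℝ) / ((P i).card : ℝ))
        + (∏ i ∈ Finset.univ.filter (fun i => P i ≠ P' i),
              ((P i ∩ P' i).card : ℝ) / ((P i).card : ℝ))
          * max (lam - ∏ i ∈ Finset.univ.filter (fun i => P i ≠ P' i),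
                  ((P i).card : ℝ) / ((P' i).card : ℝ)) 0 := by
  classical
  set S := Fintype.piFinset P with hSdef
  set S' := Fintype.piFinset P' with hS'def
  have hPc : ∀ i, (0:ℝ) < (P i).card := fun i => by
    exact_mod_cast Finset.card_pos.mpr (hP i)
  have hP'c : ∀ i, (0:ℝ) < (P' i).card := fun i => by
    exact_mod_cast Finset.card_pos.mpr (hP' i)
  -- replace filtered products by full products
  have hprod1 : (∏ i ∈ Finset.univ.filter (fun i => P i ≠ P' i),
      ((P i ∩ P' i).card : ℝ) / ((P i).card : ℝ))
      = ∏ i, ((P i ∩ P' i).card : ℝ) / ((P i).card : ℝ) := by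
    rw [Finset.prod_filter_of_ne]
    intro i _ h
    contrapose! h
    rw [h, Finset.inter_self, div_self (hP'c i).ne']
  have hprod2 : (∏ i ∈ Finset.univ.filter (fun i => P i ≠ P' i),
      ((P i).card : ℝ) / ((P' i).card : ℝ))
      = ∏ i, ((P i).card : ℝ) / ((P' i).card : ℝ) := by
    rw [Finset.prod_filter_of_ne]
    intro i _ h
    contrapose! h
    rw [h, div_self (hP'c i).ne']
  rw [hprod1, hprod2]
  -- cardinalities
  have hSS' : S ∩ S' = Fintype.piFinset (fun i => P i ∩ P' i) := by
    ext z
    simp [hSdef, hS'def, Fintype.mem_piFinset, forall_and]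
  have hn : (S.card : ℝ) = ∏ i, ((P i).card : ℝ) := by
    rw [hSdef, Fintype.card_piFinset]; push_cast; rfl
  have hn' : (S'.card : ℝ) = ∏ i, ((P' i).card : ℝ) := by
    rw [hS'def, Fintype.card_piFinset]; push_cast; rfl
  have hm : ((S ∩ S').card : ℝ) = ∏ i, ((P i ∩ P' i).card : ℝ) := by
    rw [hSS', Fintype.card_piFinset]; push_cast; rfl
  have hnpos : (0:ℝ) < S.card := by rw [hn]; exact Finset.prod_pos fun i _ => hPc i
  have hn'pos : (0:ℝ) < S'.card := by rw [hn']; exact Finset.prod_pos fun i _ => hP'c i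
  have hmn : (∏ i, ((P i ∩ P' i).card : ℝ) / ((P i).card : ℝ))
      = ((S ∩ S').card : ℝ) / S.card := by
    rw [hm, hn, ← Finset.prod_div_distrib]
  have hnn' : (∏ i, ((P i).card : ℝ) / ((P' i).card : ℝ)) = (S.card : ℝ) / S'.card := by
    rw [hn, hn', ← Finset.prod_div_distrib]
  rw [hmn, hnn']
  -- compute the sum
  have hvanish : ∀ z ∈ Finset.univ, z ∉ S →
      max (lam * (if z ∈ S then (1:ℝ)/S.card else 0) - (if z ∈ S' then (1:ℝ)/S'.card else 0)) 0 = 0 := by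
    intro z _ hz
    rw [if_neg hz, mul_zero, zero_sub, max_eq_right]
    simp only [neg_nonpos]
    positivity
  rw [← Finset.sum_subset (Finset.subset_univ S) hvanish]
  rw [← Finset.sum_inter_add_sum_sdiff S S']
  have h1 : ∑ z ∈ S ∩ S',
      max (lam * (if z ∈ S then (1:ℝ)/S.card else 0) - (if z ∈ S' then (1:ℝ)/S'.card else 0)) 0
      = ((S ∩ S').card : ℝ) * max (lam / S.card - 1 / S'.card) 0 := by
    rw [Finset.sum_congr rfl (fun z hz => ?_), Finset.sum_const, nsmul_eq_mul]
    rw [Finset.mem_inter] at hz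
    rw [if_pos hz.1, if_pos hz.2, mul_one_div]
  have h2 : ∑ z ∈ S \ S',
      max (lam * (if z ∈ S then (1:ℝ)/S.card else 0) - (if z ∈ S' then (1:ℝ)/S'.card else 0)) 0
      = ((S \ S').card : ℝ) * (lam / S.card) := by
    rw [Finset.sum_congr rfl (fun z hz => ?_), Finset.sum_const, nsmul_eq_mul]
    rw [Finset.mem_sdiff] at hz
    rw [if_pos hz.1, if_neg hz.2, sub_zero, mul_one_div, max_eq_left (by positivity)]
  rw [h1, h2]
  -- algebra
  have hcd : ((S \ S').card : ℝ) = (S.card : ℝ) - (S ∩ S').card := by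
    have h := Finset.card_sdiff_add_card_inter S S'
    push_cast [← h]
    ring
  have hmax : max (lam / S.card - 1 / S'.card) 0
      = (1 / S.card) * max (lam - S.card / S'.card) 0 := by
    rw [mul_max_of_nonneg _ _ (by positivity), mul_zero]
    congr 1
    field_simp
  rw [hcd, hmax]
  field_simp
  ring
end

section
/- Let Π be uniform on a finite set S and let p ∈ [0,1] with p·|S| an integer. Let F be the family of all functions h: universe → [0,1] with E_{Z∼Π}[h(Z)] = p. For any other uniform distribution Π' on a finite set S' with |S'| = |S|, the minimum over h ∈ F of E_{Z∼Π'}[h(Z)] is at least max(p − (1 − |S∩S'|/|S|), 0). -/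
open Finset

theorem Finset.sum_sub_card_sdiff_le_sum {ι : Type*} [DecidableEq ι] (s t : Finset ι)
    (f : ι → ℝ) (hf_nonneg : ∀ i ∈ t, 0 ≤ f i) (hf_le_one : ∀ i ∈ s, f i ≤ 1) :
    ∑ i ∈ s, f i - #(s \ t) ≤ ∑ i ∈ t, f i := by
  have h_outside : ∑ i ∈ s \ t, f i ≤ #(s \ t) := by
    simpa using sum_le_sum fun i hi => hf_le_one i (mem_sdiff.mp hi).1
  have h_inside : ∑ i ∈ s ∩ t, f i ≤ ∑ i ∈ t, f i :=
    sum_le_sum_of_subset_of_nonneg inter_subset_right fun i hi _ => hf_nonneg i hi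
  linarith [sum_inter_add_sum_sdiff s t f]

theorem Finset.one_sub_card_inter_div_card {ι : Type*} [DecidableEq ι] {s : Finset ι}
    (hs : s.Nonempty) (t : Finset ι) :
    1 - (#(s ∩ t) : ℝ) / #s = (#(s \ t) : ℝ) / #s := by
  have hs_card : (#s : ℝ) ≠ 0 := by exact_mod_cast hs.card_pos.ne'
  have h_split : (#s : ℝ) = #(s \ t) + #(s ∩ t) := mod_cast (card_sdiff_add_card_inter s t).symm
  rw [eq_div_iff hs_card, sub_mul, div_mul_cancel₀ _ hs_card]
  linarith

theorem variational_lower_bound_general {α : Type*} [DecidableEq α]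
    (S S' : Finset α) (hS : S.Nonempty)
    (hcard : S'.card = S.card)
    (p : ℝ)
    (h : α → ℝ) (hh : ∀ z, h z ∈ Set.Icc (0 : ℝ) 1)
    (hmean : (∑ z ∈ S, h z) / (S.card : ℝ) = p) :
    (∑ z ∈ S', h z) / (S'.card : ℝ)
      ≥ max (p - (1 - ((S ∩ S').card : ℝ) / (S.card : ℝ))) 0 := by
  have h_mass := sum_sub_card_sdiff_le_sum S S' h (fun z _ => (hh z).1) (fun z _ => (hh z).2)
  have h_sum_nonneg : 0 ≤ ∑ z ∈ S', h z := sum_nonneg fun z _ => (hh z).1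
  rw [hcard, ge_iff_le, max_le_iff, one_sub_card_inter_div_card hS, ← hmean, ← sub_div]
  exact ⟨div_le_div_of_nonneg_right h_mass (Nat.cast_nonneg _), by positivity⟩

/-- Variational lower bound: any `[0,1]`-valued `h` with mean `p` under
the uniform distribution on `S` has mean at least `max(p − (1 − |S∩S'|/|S|), 0)` under
the uniform distribution on `S'` when `|S'| = |S|`. -/
theorem variational_lower_bound {α : Type*} [DecidableEq α]
    (S S' : Finset α) (hS : S.Nonempty) (hS' : S'.Nonempty)
    (hcard : S'.card = S.card)
    (p : ℝ) (hp : p ∈ Set.Icc (0 : ℝ) 1) (hint : ∃ k : ℕ, p * (S.card : ℝ) = (k : ℝ))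
    (h : α → ℝ) (hh : ∀ z, h z ∈ Set.Icc (0 : ℝ) 1)
    (hmean : (∑ z ∈ S, h z) / (S.card : ℝ) = p) :
    (∑ z ∈ S', h z) / (S'.card : ℝ)
      ≥ max (p - (1 - ((S ∩ S').card : ℝ) / (S.card : ℝ))) 0 :=
  variational_lower_bound_general S S' hS hcard p h hh hmean
end

section
/- Under the same setup, the maximum over h ∈ F of E_{Z∼Π'}[h(Z)] is at most min(p + (1 − |S∩S'|/|S|), 1). -/
/-!
Moving from `S` to `S'` can only add mass on `S' \ S`, where `h ≤ 1`, so
`∑_{S'} h ≤ ∑_S h + |S' \ S| = p |S| + |S| - |S ∩ S'|`.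
-/

open Finset

namespace Finset

variable {α R : Type*}

theorem sum_le_sum_add_card_sdiff [DecidableEq α] [AddCommMonoidWithOne R] [PartialOrder R]
    [IsOrderedAddMonoid R] (s t : Finset α) {f : α → R}
    (hf₀ : ∀ z ∈ s, 0 ≤ f z) (hf₁ : ∀ z ∈ t \ s, f z ≤ 1) :
    ∑ z ∈ t, f z ≤ ∑ z ∈ s, f z + #(t \ s) := by
  rw [← sum_inter_add_sum_sdiff t s f, ← nsmul_one]
  exact add_le_add
    (sum_le_sum_of_subset_of_nonneg inter_subset_right fun z hz _ => hf₀ z hz)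
    (sum_le_card_nsmul _ f 1 hf₁)

theorem sum_div_card_le_sum_div_card_add [DecidableEq α] (s t : Finset α) (hcard : #t = #s)
    {f : α → ℝ} (hf₀ : ∀ z ∈ s, 0 ≤ f z) (hf₁ : ∀ z ∈ t \ s, f z ≤ 1) :
    (∑ z ∈ t, f z) / #t ≤ (∑ z ∈ s, f z) / #s + (1 - (#(s ∩ t) : ℝ) / #s) := by
  have hsdiff : (#(t \ s) : ℝ) = #s - #(s ∩ t) := by
    rw [eq_sub_iff_add_eq, inter_comm, ← hcard]
    exact_mod_cast card_sdiff_add_card_inter t s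
  calc (∑ z ∈ t, f z) / #t
      ≤ (∑ z ∈ s, f z + #(t \ s)) / #s := by
        rw [hcard]
        exact div_le_div_of_nonneg_right (sum_le_sum_add_card_sdiff s t hf₀ hf₁) (by positivity)
    _ = (∑ z ∈ s, f z) / #s + ((#s : ℝ) / #s - (#(s ∩ t) : ℝ) / #s) := by
        rw [hsdiff, add_div, sub_div]
    _ ≤ (∑ z ∈ s, f z) / #s + (1 - (#(s ∩ t) : ℝ) / #s) := by
        gcongr
        exact div_self_le_one _

theorem sum_div_card_le_one (s : Finset α) {f : α → ℝ} (hf : ∀ z ∈ s, f z ≤ 1) :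
    (∑ z ∈ s, f z) / #s ≤ 1 := by
  refine div_le_one_of_le₀ ?_ (Nat.cast_nonneg _)
  simpa using sum_le_card_nsmul s f 1 hf

end Finset

theorem variational_upper_bound_general {α : Type*} [DecidableEq α]
    (S S' : Finset α)
    (hcard : S'.card = S.card)
    (p : ℝ)
    (h : α → ℝ) (hh : ∀ z, h z ∈ Set.Icc (0 : ℝ) 1)
    (hmean : (∑ z ∈ S, h z) / (S.card : ℝ) = p) :
    (∑ z ∈ S', h z) / (S'.card : ℝ)
      ≤ min (p + (1 - ((S ∩ S').card : ℝ) / (S.card : ℝ))) 1 := by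
  refine le_min ?_ (sum_div_card_le_one S' fun z _ => (hh z).2)
  rw [← hmean]
  exact sum_div_card_le_sum_div_card_add S S' hcard (fun z _ => (hh z).1) fun z _ => (hh z).2

/-- Variational upper bound: any `[0,1]`-valued `h` with mean `p` under
the uniform distribution on `S` has mean at most `min(p + (1 − |S∩S'|/|S|), 1)` under
the uniform distribution on `S'` when `|S'| = |S|`. -/
theorem variational_upper_bound {α : Type*} [DecidableEq α]
    (S S' : Finset α) (hS : S.Nonempty) (hS' : S'.Nonempty)
    (hcard : S'.card = S.card)
    (p : ℝ) (hp : p ∈ Set.Icc (0 : ℝ) 1) (hint : ∃ k : ℕ, p * (S.card : ℝ) = (k : ℝ))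
    (h : α → ℝ) (hh : ∀ z, h z ∈ Set.Icc (0 : ℝ) 1)
    (hmean : (∑ z ∈ S, h z) / (S.card : ℝ) = p) :
    (∑ z ∈ S', h z) / (S'.card : ℝ)
      ≤ min (p + (1 - ((S ∩ S').card : ℝ) / (S.card : ℝ))) 1 :=
  variational_upper_bound_general S S' hcard p h hh hmean
end

section
/- The lower bound is tight: let S, S' be finite sets with |S| = |S'| = n, and let p ∈ [0,1] with p·n an integer and p ≥ 1 − |S∩S'|/n. Then there exists a function h: universe → {0,1} with E_{Z∼uniform(S)}[h] = p and E_{Z∼uniform(S')}[h] = p − (1 − |S∩S'|/n). -/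
/-! The witness is the indicator of a set `u` with `S \ S' ⊆ u ⊆ S` and `|u| = p·n`: it has mean
`p` on `S`, while on `S'` it only sees `u ∩ S'`, which has `p·n − |S \ S'| = p·n − (n − |S ∩ S'|)`
elements. -/

namespace Finset

variable {α : Type*} [DecidableEq α]

theorem exists_subset_card_eq_card_sdiff_add_card_inter (s t : Finset α) {k : ℕ}
    (hk₁ : #(s \ t) ≤ k) (hk₂ : k ≤ #s) :
    ∃ u ⊆ s, #u = k ∧ #(s \ t) + #(t ∩ u) = k := by
  obtain ⟨u, hsdiff, hus, hu⟩ := exists_subsuperset_card_eq sdiff_subset hk₁ hk₂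
  have hdiff : u \ t = s \ t :=
    (sdiff_subset_sdiff hus le_rfl).antisymm fun x hx => mem_sdiff.2 ⟨hsdiff hx, (mem_sdiff.1 hx).2⟩
  refine ⟨u, hus, hu, ?_⟩
  rw [← hdiff, inter_comm, card_sdiff_add_card_inter, hu]

theorem sum_boole_mem {R : Type*} [AddCommMonoidWithOne R] (s u : Finset α) :
    ∑ z ∈ s, (if z ∈ u then (1 : R) else 0) = #(s ∩ u) := by
  rw [sum_boole, filter_mem_eq_inter]

end Finset

open Finset

theorem lower_bound_tight_general {α : Type*} [DecidableEq α]
    (S S' : Finset α) (hS : S.Nonempty)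
    (n : ℕ) (hSn : S.card = n)
    (p : ℝ) (hp : p ∈ Set.Icc (0 : ℝ) 1) (hint : ∃ k : ℕ, p * (n : ℝ) = (k : ℝ))
    (hpq : p ≥ 1 - ((S ∩ S').card : ℝ) / (n : ℝ)) :
    ∃ h : α → ℝ, (∀ z, h z = 0 ∨ h z = 1) ∧
      (∑ z ∈ S, h z) / (n : ℝ) = p ∧
      (∑ z ∈ S', h z) / (n : ℝ) = p - (1 - ((S ∩ S').card : ℝ) / (n : ℝ)) := by
  obtain ⟨k, hk⟩ := hint
  have hn : (0 : ℝ) < n := by rw [← hSn]; exact_mod_cast hS.card_pos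
  have hsplit : (#(S \ S') : ℝ) + #(S ∩ S') = n := by
    exact_mod_cast hSn ▸ card_sdiff_add_card_inter S S'
  have hpq' : (n : ℝ) - #(S ∩ S') ≤ p * n := by
    have := mul_le_mul_of_nonneg_right hpq hn.le
    rwa [sub_mul, one_mul, div_mul_cancel₀ _ hn.ne'] at this
  have hk₁ : #(S \ S') ≤ k := by exact_mod_cast (by linarith : (#(S \ S') : ℝ) ≤ k)
  have hk₂ : k ≤ #S := by
    rw [hSn]; exact_mod_cast hk ▸ mul_le_of_le_one_left hn.le hp.2
  obtain ⟨u, huS, hu, hu'⟩ := exists_subset_card_eq_card_sdiff_add_card_inter S S' hk₁ hk₂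
  refine ⟨fun z => if z ∈ u then 1 else 0, fun z => by by_cases hz : z ∈ u <;> simp [hz], ?_, ?_⟩
  · rw [sum_boole_mem, inter_eq_right.2 huS, hu, ← hk, mul_div_cancel_right₀ _ hn.ne']
  · have hu'' : (#(S \ S') : ℝ) + #(S' ∩ u) = k := by exact_mod_cast hu'
    rw [sum_boole_mem, div_eq_iff hn.ne']
    field_simp
    linarith

/-- Tightness of the lower bound: if `|S| = |S'| = n`, `p·n` is an integer
and `p ≥ 1 − |S∩S'|/n`, there is a `{0,1}`-valued `h` with mean `p` under uniform(S) and
mean `p − (1 − |S∩S'|/n)` under uniform(S'). -/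
theorem lower_bound_tight {α : Type*} [DecidableEq α]
    (S S' : Finset α) (hS : S.Nonempty) (hS' : S'.Nonempty)
    (n : ℕ) (hSn : S.card = n) (hS'n : S'.card = n)
    (p : ℝ) (hp : p ∈ Set.Icc (0 : ℝ) 1) (hint : ∃ k : ℕ, p * (n : ℝ) = (k : ℝ))
    (hpq : p ≥ 1 - ((S ∩ S').card : ℝ) / (n : ℝ)) :
    ∃ h : α → ℝ, (∀ z, h z = 0 ∨ h z = 1) ∧
      (∑ z ∈ S, h z) / (n : ℝ) = p ∧
      (∑ z ∈ S', h z) / (n : ℝ) = p - (1 - ((S ∩ S').card : ℝ) / (n : ℝ)) :=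
  lower_bound_tight_general S S' hS n hSn p hp hint hpq
end
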